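/- arXiv:2105.11700 — 6 statements merged into one kernel-verified Lean document; each statement's English description precedes it below -/
import Mathlib

section
/- Let λ be a strong limit cardinal with λ > ℵ₀ and let μ > λ be a regular cardinal. Then every ⊆*-increasing sequence ⟨D_α : α < μ⟩ of subsets of λ stabilizes modulo finite: there exists α* < μ such that for every α with α* ≤ α < μ, the symmetric difference D_α △ D_{α*} is finite (i.e. D_α =* D_{α*}). -/
/-!
Fix `ν < λ`. Modulo finite sets the traces `D α ∩ ν` take at most `2 ^ |ν| < λ < μ` values, and a
monotone map into fewer than `cof μ` values is eventually constant; so the traces stabilize below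
each `ν`, and, as `λ < μ`, below all `ν` at once beyond some `α₀`. Beyond `α₀` every difference
`D α \ D β` has finite initial segments, hence is countable. Therefore, for `α₀ ≤ α ≤ β`, the
class of `D α` modulo finite is determined by `D α ∩ (D β \ D α₀)`, a subset of a countable set:
every bounded stretch of the sequence takes at most `2 ^ ℵ₀` values. Since `(2 ^ ℵ₀)⁺ ≤ λ < μ`,
the whole sequence then takes at most `2 ^ ℵ₀ < cof μ` values, so it is eventually constant.
-/

open Cardinal Set Filter Order

universe u

/-- The class of `s` in `𝒫 α / fin`, ordered by `⊆*`. -/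
def modFinite {α : Type*} (s : Set α) : Germ (cofinite : Filter α) Prop := ((· ∈ s) : α → Prop)

section modFinite

variable {α : Type*} {s t x a c : Set α}

theorem modFinite_le_modFinite_iff : modFinite s ≤ modFinite t ↔ (s \ t).Finite := by
  rw [modFinite, modFinite, Germ.coe_le, EventuallyLE, eventually_cofinite]
  simp only [le_Prop_eq, Classical.not_imp]
  rfl

theorem modFinite_eq_modFinite_iff : modFinite s = modFinite t ↔ (s \ t ∪ t \ s).Finite := by
  rw [le_antisymm_iff, modFinite_le_modFinite_iff, modFinite_le_modFinite_iff, finite_union]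

theorem modFinite_eq_union_inter_diff (hax : modFinite a ≤ modFinite x)
    (hxc : modFinite x ≤ modFinite c) : modFinite x = modFinite (a ∪ x ∩ (c \ a)) := by
  rw [modFinite_le_modFinite_iff] at hax hxc
  rw [modFinite_eq_modFinite_iff]
  refine (hxc.union hax).subset ?_
  rintro y (⟨hyx, hy⟩ | ⟨hy, hyx⟩)
  · exact Or.inl ⟨hyx, fun hyc => hy (Or.inr ⟨hyx, hyc, fun hya => hy (Or.inl hya)⟩)⟩
  · exact Or.inr ⟨hy.elim id fun h => absurd h.1 hyx, hyx⟩

end modFinite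

section cof

variable {ι β : Type u} [LinearOrder ι]

theorem exists_forall_lt_of_mk_lt_cof {s : Set ι} (hs : #s < cof ι) : ∃ T, ∀ x ∈ s, x < T :=
  not_isCofinal_iff.1 fun h => (cof_le h).not_gt hs

variable [PartialOrder β] {f : ι → β}

theorem Filter.EventuallyConst.of_monotone_of_mk_range_lt_cof (hf : Monotone f)
    (h : #(range f) < cof ι) : atTop.EventuallyConst f :=
  (of_monotone_of_lt_cof (f := rangeFactorization f) (fun _ _ hab => hf hab)
    (by simpa using h)).comp Subtype.val

/-- A set of `κ⁺` values of `f` has representatives below some `T`, since `κ⁺ < cof ι`. -/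
theorem Filter.EventuallyConst.of_monotone_of_mk_image_Iic_le (hf : Monotone f)
    {κ : Cardinal.{u}} (hκ : succ κ < cof ι) (hbdd : ∀ T, #(f '' Iic T) ≤ κ) :
    atTop.EventuallyConst f := by
  refine of_monotone_of_mk_range_lt_cof hf (lt_of_le_of_lt ?_ ((le_succ κ).trans_lt hκ))
  by_contra! h
  obtain ⟨p, hp⟩ := le_mk_iff_exists_set.1 (succ_le_of_lt h)
  obtain ⟨T, hT⟩ := exists_forall_lt_of_mk_lt_cof (s := rangeSplitting f '' p)
    (mk_image_le.trans_lt (hp ▸ hκ))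
  have hsub : Subtype.val '' p ⊆ f '' Iic T := by
    rintro _ ⟨y, hy, rfl⟩
    exact ⟨rangeSplitting f y, (hT _ (mem_image_of_mem _ hy)).le, apply_rangeSplitting f y⟩
  have hp_le : #p ≤ κ := (mk_image_eq Subtype.val_injective).symm.trans_le
    ((mk_le_mk_of_subset hsub).trans (hbdd T))
  exact (lt_succ κ).not_ge (hp ▸ hp_le)

end cof

theorem Set.Countable.of_forall_inter_Iio_finite {α : Type*} [LinearOrder α] {X : Set α}
    (h : ∀ a, (X ∩ Iio a).Finite) : X.Countable := by
  have hmono : StrictMonoOn (fun x => (X ∩ Iio x).ncard) X := fun x hx y _ hxy =>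
    ncard_lt_ncard ((ssubset_iff_of_subset (inter_subset_inter_right _ (Iio_subset_Iio hxy.le))).2
      ⟨x, ⟨hx, hxy⟩, fun h => lt_irrefl x h.2⟩) (h y)
  exact MapsTo.countable_of_injOn (mapsTo_univ _ _) hmono.injOn countable_univ

section sequence

variable {ι α : Type u} [LinearOrder ι] {D : ι → Set α}

theorem exists_forall_diff_inter_finite (hD : Monotone fun i => modFinite (D i)) {Y : Set α}
    (hY : 2 ^ #Y < cof ι) : ∃ i₀, ∀ i j, i₀ ≤ i → i₀ ≤ j → ((D i \ D j) ∩ Y).Finite := by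
  have : Nonempty ι := cof_ne_zero_iff.1 (ne_bot_of_gt hY)
  set g := fun i => modFinite (D i ∩ Y)
  have hg : Monotone g := fun i j hij => modFinite_le_modFinite_iff.2 <|
    (modFinite_le_modFinite_iff.1 (hD hij)).subset fun x hx => ⟨hx.1.1, fun h => hx.2 ⟨h, hx.1.2⟩⟩
  have hrange : #(range g) < cof ι := by
    refine lt_of_le_of_lt ?_ (mk_powerset Y ▸ hY)
    exact (mk_le_mk_of_subset (range_subset_iff.2 fun i => mem_image_of_mem modFinite
      (inter_subset_right : D i ∩ Y ⊆ Y))).trans mk_image_le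
  obtain ⟨i₀, hi₀⟩ :=
    eventuallyConst_atTop.1 (EventuallyConst.of_monotone_of_mk_range_lt_cof hg hrange)
  refine ⟨i₀, fun i j hi hj => ?_⟩
  refine ((modFinite_eq_modFinite_iff.1 ((hi₀ i hi).trans (hi₀ j hj).symm)).subset
    subset_union_left).subset ?_
  rintro x ⟨⟨hxi, hxj⟩, hxY⟩
  exact ⟨⟨hxi, hxY⟩, fun h => hxj h.1⟩

theorem exists_forall_diff_countable [LinearOrder α] (hD : Monotone fun i => modFinite (D i))
    (hIio : ∀ ν : α, 2 ^ #(Iio ν) < cof ι) (hα : #α < cof ι) :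
    ∃ i₀, ∀ i j, i₀ ≤ i → i₀ ≤ j → (D i \ D j).Countable := by
  choose i₀ hi₀ using fun ν => exists_forall_diff_inter_finite hD (hIio ν)
  obtain ⟨T, hT⟩ := exists_forall_lt_of_mk_lt_cof (mk_range_le.trans_lt hα)
  refine ⟨T, fun i j hi hj => .of_forall_inter_Iio_finite fun ν => hi₀ ν i j ?_ ?_⟩
  · exact (hT _ (mem_range_self ν)).le.trans hi
  · exact (hT _ (mem_range_self ν)).le.trans hj

theorem eventuallyConst_modFinite_of_diff_countable (hD : Monotone fun i => modFinite (D i))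
    {i₀ : ι} (hi₀ : ∀ i j, i₀ ≤ i → i₀ ≤ j → (D i \ D j).Countable)
    (hcof : succ (2 ^ ℵ₀) < cof ι) : atTop.EventuallyConst fun i => modFinite (D i) := by
  set g := fun i => modFinite (D (max i i₀))
  have hg : Monotone g := hD.comp (monotone_id.max monotone_const)
  have hbdd : ∀ T, #(g '' Iic T) ≤ 2 ^ ℵ₀ := by
    intro T
    set E := D (max T i₀) \ D i₀
    have hsub : g '' Iic T ⊆ (fun s => modFinite (D i₀ ∪ s)) '' 𝒫 E := by
      rintro _ ⟨i, hi, rfl⟩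
      exact ⟨D (max i i₀) ∩ E, inter_subset_right, (modFinite_eq_union_inter_diff
        (hD (le_max_right _ _)) (hD (max_le_max_right _ hi))).symm⟩
    calc #(g '' Iic T) ≤ #(𝒫 E) := (mk_le_mk_of_subset hsub).trans mk_image_le
      _ = 2 ^ #E := mk_powerset E
      _ ≤ 2 ^ ℵ₀ := power_le_power_left two_ne_zero
        (le_aleph0_iff_set_countable.2 (hi₀ _ _ (le_max_right _ _) le_rfl))
  refine (EventuallyConst.of_monotone_of_mk_image_Iic_le hg hcof hbdd).congr ?_
  filter_upwards [eventually_ge_atTop i₀] with i hi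
  simp only [g, max_eq_left hi]

end sequence

/-- **Stabilization modulo finite.** If `lam` is a strong limit cardinal with `lam > ℵ₀`
and `mu > lam` is regular, then every `⊆*`-increasing sequence `⟨D α : α < mu⟩` of subsets
of `lam` stabilizes modulo finite. -/
theorem stabilization_mod_finite
    (lam mu : Cardinal) (hlam : ℵ₀ < lam) (hsl : lam.IsStrongLimit)
    (hmu : mu.IsRegular) (hlm : lam < mu)
    (D : mu.ord.ToType → Set lam.ord.ToType)
    (hinc : ∀ a b : mu.ord.ToType, a < b → (D a \ D b).Finite) :
    ∃ astar : mu.ord.ToType, ∀ a : mu.ord.ToType, astar ≤ a →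
      ((D a \ D astar) ∪ (D astar \ D a)).Finite := by
  have hlam_lt : lam < cof mu.ord.ToType := by rwa [Ordinal.cof_toType, hmu.cof_ord]
  have hD : Monotone fun a => modFinite (D a) := fun a b hab =>
    modFinite_le_modFinite_iff.2 <| hab.lt_or_eq.elim (hinc a b) fun h => by simp [h]
  obtain ⟨i₀, hi₀⟩ := exists_forall_diff_countable hD
    (fun ν => (hsl.isStrongPrelimit (by simpa using mk_Iio_lt ν)).trans hlam_lt)
    (by rwa [mk_ord_toType])
  have hcontinuum : succ (2 ^ ℵ₀) < cof mu.ord.ToType :=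
    (succ_le_of_lt (hsl.isStrongPrelimit hlam)).trans_lt hlam_lt
  have : Nonempty mu.ord.ToType := Ordinal.nonempty_toType_iff.2 hmu.ord_pos.ne'
  obtain ⟨astar, h⟩ :=
    eventuallyConst_atTop.1 (eventuallyConst_modFinite_of_diff_countable hD hi₀ hcontinuum)
  exact ⟨astar, fun a ha => modFinite_eq_modFinite_iff.1 (h a ha)⟩
end

section
/- Let α be an uncountable cardinal, let ρ ≤ α be an ordinal, and let ⟨W_j : j < ρ⟩ be a sequence of pairwise distinct normal ultrafilters on α. Then there exist pairwise disjoint sets ⟨Z_j : j < ρ⟩ such that Z_j ∈ W_j for every j < ρ. -/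
open Cardinal Set

/-!
Choose, for every pair `i < j`, a set in `W i` whose complement lies in `W j`; this gives sets
`T j ξ ∈ W j` with `T i j` and `T j i` disjoint whenever `i ≠ j`. Let `Z j` be the diagonal
intersection of `⟨T j ξ : ξ < α⟩`, cut down to the ordinals above `j`. A point `x` of `Z i ∩ Z j`
lies above both `i` and `j`, hence in `T i j ∩ T j i = ∅`.
-/

/-- A normal ultrafilter on an uncountable cardinal `θ`, presented as an ultrafilter on
`Ordinal` concentrating on the ordinals below `θ`: it is nonprincipal, `θ`-complete
(closed under intersections of fewer than `θ` members) and closed under diagonal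
intersections. -/
def IsNormalUltrafilterOn (θ : Cardinal) (U : Ultrafilter Ordinal) : Prop :=
  Set.Iio θ.ord ∈ U ∧
  (∀ x : Ordinal, ({x} : Set Ordinal)ᶜ ∈ U) ∧
  (∀ β : Ordinal, β < θ.ord → ∀ A : Ordinal → Set Ordinal,
    (∀ ξ, ξ < β → A ξ ∈ U) → (⋂ ξ ∈ Set.Iio β, A ξ) ∈ U) ∧
  (∀ A : Ordinal → Set Ordinal, (∀ ξ, ξ < θ.ord → A ξ ∈ U) →
    {b : Ordinal | b < θ.ord ∧ ∀ ξ, ξ < b → b ∈ A ξ} ∈ U)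

namespace Ultrafilter

variable {α ι : Type*}

theorem exists_mem_compl_mem_of_ne {U V : Ultrafilter α} (h : U ≠ V) : ∃ S ∈ U, Sᶜ ∈ V := by
  by_contra! hUV
  exact h (eq_of_le fun S hS => compl_notMem_iff.mp (hUV S hS)).symm

theorem exists_mem_compl_mem_of_injOn {W : ι → Ultrafilter α} {s : Set ι} (hW : s.InjOn W)
    {i j : ι} (hij : i ≠ j) : ∃ S : Set α, (i ∈ s → S ∈ W i) ∧ (j ∈ s → Sᶜ ∈ W j) := by
  by_cases hi : i ∈ s
  · by_cases hj : j ∈ s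
    · obtain ⟨S, hSi, hSj⟩ := exists_mem_compl_mem_of_ne (hW.ne hi hj hij)
      exact ⟨S, fun _ => hSi, fun _ => hSj⟩
    · exact ⟨univ, fun _ => Filter.univ_mem, fun hj' => absurd hj' hj⟩
  · exact ⟨∅, fun hi' => absurd hi' hi, fun _ => compl_empty ▸ Filter.univ_mem⟩

theorem exists_disjoint_separators [LinearOrder ι] {W : ι → Ultrafilter α} {s : Set ι}
    (hW : s.InjOn W) : ∃ T : ι → ι → Set α,
      (∀ i ∈ s, ∀ j, T i j ∈ W i) ∧ ∀ i j, i ≠ j → Disjoint (T i j) (T j i) := by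
  choose S hS using fun i j (hij : i ≠ j) => exists_mem_compl_mem_of_injOn hW hij
  refine ⟨fun i j => if h : i < j then S i j h.ne else if h' : j < i then (S j i h'.ne)ᶜ
    else univ, fun i hi j => ?_, fun i j hij => ?_⟩
  · by_cases h : i < j
    · simpa [h] using (hS i j h.ne).1 hi
    by_cases h' : j < i
    · simpa [h, h'] using (hS j i h'.ne).2 hi
    simp only [h, h', dite_false]
    exact Filter.univ_mem
  · rcases hij.lt_or_gt with h | h
    · simpa [h, h.not_gt] using disjoint_compl_right
    · simpa [h, h.not_gt] using disjoint_compl_left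

end Ultrafilter

def Ordinal.diagInter (o : Ordinal) (A : Ordinal → Set Ordinal) : Set Ordinal :=
  {b | b < o ∧ ∀ ξ, ξ < b → b ∈ A ξ}

theorem Ordinal.disjoint_Ioi_inter_diagInter {o i j : Ordinal}
    {T : Ordinal → Ordinal → Set Ordinal} (hT : Disjoint (T i j) (T j i)) :
    Disjoint (Ioi i ∩ diagInter o (T i)) (Ioi j ∩ diagInter o (T j)) :=
  Set.disjoint_left.mpr fun _ ⟨hxi, _, hTi⟩ ⟨hxj, _, hTj⟩ =>
    Set.disjoint_left.mp hT (hTi j hxj) (hTj i hxi)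

namespace IsNormalUltrafilterOn

variable {θ : Cardinal} {U : Ultrafilter Ordinal}

theorem diagInter_mem (hU : IsNormalUltrafilterOn θ U) {A : Ordinal → Set Ordinal}
    (hA : ∀ ξ, ξ < θ.ord → A ξ ∈ U) : Ordinal.diagInter θ.ord A ∈ U :=
  hU.2.2.2 A hA

theorem Ioi_mem (hU : IsNormalUltrafilterOn θ U) {j : Ordinal} (hj : j < θ.ord) : Ioi j ∈ U := by
  have hIci : (⋂ ξ ∈ Iio j, ({ξ}ᶜ : Set Ordinal)) ∈ U := hU.2.2.1 j hj _ fun ξ _ => hU.2.1 ξ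
  filter_upwards [hIci, hU.2.1 j] with b hb hbj
  simp only [mem_iInter, mem_Iio, mem_compl_iff, mem_singleton_iff] at hb
  exact lt_of_le_of_ne (not_lt.mp fun hbj' => hb b hbj' rfl) (Ne.symm hbj)

end IsNormalUltrafilterOn

theorem separate_normal_ultrafilters_general
    (α : Cardinal) (ρ : Ordinal) (hρ : ρ ≤ α.ord)
    (W : Ordinal → Ultrafilter Ordinal)
    (hW : ∀ j, j < ρ → IsNormalUltrafilterOn α (W j))
    (hdist : ∀ i j, i < ρ → j < ρ → i ≠ j → W i ≠ W j) :
    ∃ Z : Ordinal → Set Ordinal,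
      (∀ j, j < ρ → Z j ∈ W j) ∧
      (∀ i j, i < ρ → j < ρ → i ≠ j → Disjoint (Z i) (Z j)) := by
  have hinj : (Iio ρ).InjOn W := fun i hi j hj hWij =>
    by_contra fun hij => hdist i j hi hj hij hWij
  obtain ⟨T, hTmem, hTdisj⟩ := Ultrafilter.exists_disjoint_separators hinj
  refine ⟨fun j => Ioi j ∩ Ordinal.diagInter α.ord (T j), fun j hj => ?_,
    fun i j _ _ hij => Ordinal.disjoint_Ioi_inter_diagInter (hTdisj i j hij)⟩
  exact Filter.inter_mem ((hW j hj).Ioi_mem (hj.trans_le hρ))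
    ((hW j hj).diagInter_mem fun ξ _ => hTmem j hj ξ)

/-- Pairwise distinct normal ultrafilters `⟨W j : j < ρ⟩` on an uncountable cardinal `α`,
where `ρ ≤ α`, can be separated by pairwise disjoint sets `Z j ∈ W j`. -/
theorem separate_normal_ultrafilters
    (α : Cardinal) (hα : ℵ₀ < α) (ρ : Ordinal) (hρ : ρ ≤ α.ord)
    (W : Ordinal → Ultrafilter Ordinal)
    (hW : ∀ j, j < ρ → IsNormalUltrafilterOn α (W j))
    (hdist : ∀ i j, i < ρ → j < ρ → i ≠ j → W i ≠ W j) :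
    ∃ Z : Ordinal → Set Ordinal,
      (∀ j, j < ρ → Z j ∈ W j) ∧
      (∀ i j, i < ρ → j < ρ → i ≠ j → Disjoint (Z i) (Z j)) :=
  separate_normal_ultrafilters_general α ρ hρ W hW hdist
end

section
/- Suppose κ is a regular uncountable cardinal with 2^{<κ} = κ, and F is a P-point filter on κ. Let ⟨X_i : i < κ⁺⟩ be a sequence of members of F and let ⟨Z_i : i < κ⁺⟩ be any sequence of subsets of κ. Then there is a set Y ⊆ κ⁺ of cardinality κ such that: (1) ⋂_{i∈Y} X_i ∈ F; and (2) there is α < κ⁺ with α ∉ Y such that [Z_α]^{<ω} ⊆ ⋃_{i∈Y} [Z_i]^{<ω}, i.e. every finite subset of Z_α is a finite subset of Z_i for some i ∈ Y. -/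
open Cardinal Set

/-- `F` is a P-point filter on `κ` (identified with the ordinals below `κ`) with witnessing
function `π`: `F` is uniform (every member has cardinality `κ`), `κ`-complete, `π` is almost
one-to-one on a member of `F`, and `F` is closed under the `π`-diagonal intersections
`Δ*_{i<κ} A i = {ν : ν ∈ A i for all i < π ν}`. -/
def IsPPointFilter (κ : Cardinal) (F : Filter κ.ord.ToType)
    (π : κ.ord.ToType → κ.ord.ToType) : Prop :=
  (∀ A ∈ F, #↥A = κ) ∧
  (∀ (ι : Type) (A : ι → Set κ.ord.ToType), #ι < κ →
      (∀ i, A i ∈ F) → (⋂ i, A i) ∈ F) ∧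
  (∃ X ∈ F, ∀ a : κ.ord.ToType, #↥{ν | ν ∈ X ∧ π ν = a} < κ) ∧
  (∀ A : κ.ord.ToType → Set κ.ord.ToType, (∀ i, A i ∈ F) →
      {ν | ∀ i, i < π ν → ν ∈ A i} ∈ F)

/-! The trace of `(X j, Z j)` on a set of size `< κ` takes at most `2^{<κ} = κ` values, while
there are `κ⁺` indices `j`. The sets `D ξ`, made of the `ν ≤ ξ` and of the `ν ∈ W` (with `W ∈ F`
a set on which `π` is almost one-to-one) with `π ν ≤ ξ`, have size `< κ`, so some `α` shares its
trace on every `D ξ` with more than `κ` indices; a recursion on `ξ` picks distinct such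
`g ξ ≠ α`, and `Y = range g` works. A finite subset of `Z α` lies in some `Iic ξ ⊆ D ξ`, hence
in `Z (g ξ)`.
Finally `⋂ ξ, X (g ξ)` contains `W ∩ X α ∩ Δ*_ξ X (g ξ)`: a point `ν` of it lies in `X (g ξ)`
by the diagonal intersection when `ξ < π ν`, and by agreement of traces on `D ξ` when `π ν ≤ ξ`. -/

namespace Cardinal

universe u

theorem mk_Iic_ord_toType_lt {κ : Cardinal.{u}} (hκ : ℵ₀ ≤ κ) (ξ : κ.ord.ToType) :
    #(Iic ξ) < κ := by
  simpa using mk_Iic_lt ξ (by simp) (by simpa using hκ)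

theorem mk_setOf_mem_preimage_lt_of_isRegular {α β : Type u} {κ : Cardinal.{u}}
    (hκ : κ.IsRegular) {π : α → β} {W : Set α} (hW : ∀ b, #{ν | ν ∈ W ∧ π ν = b} < κ)
    {s : Set β} (hs : #s < κ) : #{ν | ν ∈ W ∧ π ν ∈ s} < κ := by
  have hcover : {ν | ν ∈ W ∧ π ν ∈ s} = ⋃ b : s, {ν | ν ∈ W ∧ π ν = b} := by
    ext ν
    simp
  rw [hcover]
  exact (card_iUnion_lt_iff_forall_of_isRegular hκ hs).2 fun b => hW b

theorem mk_range_inter_prod_le {ι α : Type u} (X Z : ι → Set α) (D : Set α) :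
    #(range fun j => (X j ∩ D, Z j ∩ D)) ≤ 2 ^ #D * 2 ^ #D := by
  have hsub : (range fun j => (X j ∩ D, Z j ∩ D)) ⊆ 𝒫 D ×ˢ 𝒫 D := by
    rintro _ ⟨j, rfl⟩
    exact ⟨inter_subset_right, inter_subset_right⟩
  simpa only [mk_setProd, mk_powerset] using mk_le_mk_of_subset hsub

theorem mk_setOf_mk_preimage_le {I V : Type u} {κ : Cardinal.{u}} (hκ : ℵ₀ ≤ κ) (f : I → V)
    (hf : #(range f) ≤ κ) : #{a | #(f ⁻¹' {f a}) ≤ κ} ≤ κ := by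
  set S := {v | v ∈ range f ∧ #(f ⁻¹' {v}) ≤ κ}
  have hcover : {a | #(f ⁻¹' {f a}) ≤ κ} ⊆ ⋃ v ∈ S, f ⁻¹' {v} :=
    fun a ha => mem_biUnion ⟨mem_range_self a, ha⟩ rfl
  calc #{a | #(f ⁻¹' {f a}) ≤ κ} ≤ #S * ⨆ v : S, #(f ⁻¹' {v.1}) :=
        (mk_le_mk_of_subset hcover).trans (mk_biUnion_le _ _)
    _ ≤ κ * κ := mul_le_mul' ((mk_le_mk_of_subset fun _ hv => hv.1).trans hf)
        (ciSup_le' fun v => v.2.2)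
    _ = κ := mul_eq_self hκ

theorem exists_forall_lt_mk_preimage {ι I V : Type u} {κ : Cardinal.{u}} (hκ : ℵ₀ ≤ κ)
    (f : ι → I → V) (hι : #ι ≤ κ) (hf : ∀ i, #(range (f i)) ≤ κ) (hI : κ < #I) :
    ∃ a, ∀ i, κ < #(f i ⁻¹' {f i a}) := by
  by_contra! h
  have hcover : (Set.univ : Set I) ⊆ ⋃ i, {a | #(f i ⁻¹' {f i a}) ≤ κ} :=
    fun a _ => mem_iUnion.2 (h a)
  refine hI.not_ge ?_
  calc #I = #(Set.univ : Set I) := mk_univ.symm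
    _ ≤ #ι * ⨆ i, #{a | #(f i ⁻¹' {f i a}) ≤ κ} :=
      (mk_le_mk_of_subset hcover).trans (mk_iUnion_le _)
    _ ≤ κ * κ := mul_le_mul' hι (ciSup_le' fun i => mk_setOf_mk_preimage_le hκ (f i) (hf i))
    _ = κ := mul_eq_self hκ

theorem exists_injective_forall_mem_diff {ι β : Type u} [LinearOrder ι] [WellFoundedLT ι]
    (K : ι → Set β) (A : Set β) (hK : ∀ i, #(Iio i) + #A < #(K i)) :
    ∃ g : ι → β, Function.Injective g ∧ ∀ i, g i ∈ K i \ A := by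
  have step : ∀ i (p : ∀ j, j < i → β), ∃ b ∈ K i \ A, ∀ j (hj : j < i), b ≠ p j hj := by
    intro i p
    have hsmall : #((range fun j : Iio i => p j j.2) ∪ A : Set β) < #(K i) :=
      ((mk_union_le _ _).trans (add_le_add mk_range_le le_rfl)).trans_lt (hK i)
    obtain ⟨b, hbK, hb⟩ := not_subset.1 fun h => (mk_le_mk_of_subset h).not_gt hsmall
    exact ⟨b, ⟨hbK, fun hbA => hb (Or.inr hbA)⟩, fun j hj hbj => hb (Or.inl ⟨⟨j, hj⟩, hbj.symm⟩)⟩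
  let g : ι → β := WellFoundedLT.fix fun i p => (step i p).choose
  have hg : ∀ i, g i ∈ K i \ A ∧ ∀ j, j < i → g i ≠ g j := fun i => by
    rw [show g i = (step i fun j _ => g j).choose from WellFoundedLT.fix_eq _ i]
    exact ⟨(step i _).choose_spec.1, (step i _).choose_spec.2⟩
  exact ⟨g, .of_lt_imp_ne fun i j hij => ((hg j).2 i hij).symm, fun i => (hg i).1⟩

theorem mk_setOf_map_le_union_Iic_lt {κ : Cardinal.{u}} (hκ : κ.IsRegular)
    {π : κ.ord.ToType → κ.ord.ToType} {W : Set κ.ord.ToType}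
    (hW : ∀ a, #{ν | ν ∈ W ∧ π ν = a} < κ) (ξ : κ.ord.ToType) :
    #({ν | ν ∈ W ∧ π ν ∈ Iic ξ} ∪ Iic ξ : Set κ.ord.ToType) < κ :=
  (mk_union_le _ _).trans_lt <| add_lt_of_lt hκ.aleph0_le
    (mk_setOf_mem_preimage_lt_of_isRegular hκ hW (mk_Iic_ord_toType_lt hκ.aleph0_le ξ))
    (mk_Iic_ord_toType_lt hκ.aleph0_le ξ)

end Cardinal

theorem Filter.iInter_mem_of_diagonal_mem {α ι : Type*} [LinearOrder ι] {F : Filter α}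
    {π : α → ι} (hdiag : ∀ A : ι → Set α, (∀ i, A i ∈ F) → {ν | ∀ i, i < π ν → ν ∈ A i} ∈ F)
    {A : ι → Set α} (hA : ∀ i, A i ∈ F) {B : Set α} (hB : B ∈ F)
    (hBA : ∀ i, ∀ ν ∈ B, π ν ≤ i → ν ∈ A i) : ⋂ i, A i ∈ F := by
  refine mem_of_superset (inter_mem hB (hdiag A hA)) fun ν hν => mem_iInter.2 fun i => ?_
  rcases lt_or_ge i (π ν) with hi | hi
  · exact hν.2 i hi
  · exact hBA i ν hν.1 hi

theorem pPoint_generalized_galvin_general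
    (κ : Cardinal) (hreg : κ.IsRegular)
    (h2 : ∀ ν : Cardinal, ν < κ → (2 : Cardinal) ^ ν ≤ κ)
    (F : Filter κ.ord.ToType) (π : κ.ord.ToType → κ.ord.ToType)
    (hpp : IsPPointFilter κ F π)
    (X Z : (Order.succ κ).ord.ToType → Set κ.ord.ToType)
    (hX : ∀ i, X i ∈ F) :
    ∃ Y : Set ((Order.succ κ).ord.ToType), #↥Y = κ ∧
      (⋂ i ∈ Y, X i) ∈ F ∧
      ∃ α, α ∉ Y ∧ ∀ s : Set κ.ord.ToType, s.Finite → s ⊆ Z α →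
        ∃ i ∈ Y, s ⊆ Z i := by
  obtain ⟨-, -, ⟨W, hWF, hW⟩, hdiag⟩ := hpp
  have hκ₀ : ℵ₀ ≤ κ := hreg.aleph0_le
  let D : κ.ord.ToType → Set κ.ord.ToType := fun ξ => {ν | ν ∈ W ∧ π ν ∈ Iic ξ} ∪ Iic ξ
  have hD : ∀ ξ, #(D ξ) < κ := mk_setOf_map_le_union_Iic_lt hreg hW
  let trace := fun ξ j => (X j ∩ D ξ, Z j ∩ D ξ)
  obtain ⟨α, hα⟩ := exists_forall_lt_mk_preimage hκ₀ trace (mk_ord_toType κ).le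
    (fun ξ => (mk_range_inter_prod_le X Z (D ξ)).trans <|
      (mul_le_mul' (h2 _ (hD ξ)) (h2 _ (hD ξ))).trans (mul_eq_self hκ₀).le)
    (by rw [mk_ord_toType]; exact Order.lt_succ κ)
  obtain ⟨g, hg, hgα⟩ := exists_injective_forall_mem_diff (fun ξ => trace ξ ⁻¹' {trace ξ α}) {α}
    fun ξ => by
      rw [mk_singleton]
      refine (add_lt_of_lt hκ₀ ?_ (one_lt_aleph0.trans_le hκ₀)).trans (hα ξ)
      exact (mk_le_mk_of_subset Iio_subset_Iic_self).trans_lt (mk_Iic_ord_toType_lt hκ₀ ξ)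
  have hagree : ∀ ξ, ∀ ν ∈ D ξ, (ν ∈ X α → ν ∈ X (g ξ)) ∧ (ν ∈ Z α → ν ∈ Z (g ξ)) := by
    intro ξ ν hν
    obtain ⟨hXα, hZα⟩ := Prod.ext_iff.1 (hgα ξ).1
    exact ⟨fun h => ((Set.ext_iff.1 hXα ν).2 ⟨h, hν⟩).1,
      fun h => ((Set.ext_iff.1 hZα ν).2 ⟨h, hν⟩).1⟩
  have : Nonempty κ.ord.ToType := Ordinal.nonempty_toType_iff.2 (ord_eq_zero.not.2 hreg.pos.ne')
  refine ⟨range g, by rw [mk_range_eq g hg, mk_ord_toType], ?_, α, fun ⟨ξ, hξ⟩ => (hgα ξ).2 hξ, ?_⟩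
  · rw [biInter_range]
    exact Filter.iInter_mem_of_diagonal_mem hdiag (fun ξ => hX (g ξ)) (Filter.inter_mem hWF (hX α))
      fun ξ ν hν hπ => (hagree ξ ν (Or.inl ⟨hν.1, hπ⟩)).1 hν.2
  · intro s hs hsZ
    obtain ⟨ξ, hξ⟩ := hs.bddAbove
    exact ⟨g ξ, mem_range_self ξ, fun ν hν => (hagree ξ ν (Or.inr (hξ hν))).2 (hsZ hν)⟩

/-- **Generalized Galvin property for P-point filters.** If `κ` is regular uncountable with
`2^{<κ} = κ` and `F` is a P-point filter on `κ`, then for every sequence `⟨X i : i < κ⁺⟩`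
of members of `F` and every sequence `⟨Z i : i < κ⁺⟩` of subsets of `κ` there is
`Y ⊆ κ⁺` of cardinality `κ` with `⋂_{i ∈ Y} X i ∈ F`, and some `α ∉ Y` such that every
finite subset of `Z α` is contained in `Z i` for some `i ∈ Y`. -/
theorem pPoint_generalized_galvin
    (κ : Cardinal) (hreg : κ.IsRegular) (hκ : ℵ₀ < κ)
    (h2 : ∀ ν : Cardinal, ν < κ → (2 : Cardinal) ^ ν ≤ κ)
    (F : Filter κ.ord.ToType) (π : κ.ord.ToType → κ.ord.ToType)
    (hpp : IsPPointFilter κ F π)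
    (X Z : (Order.succ κ).ord.ToType → Set κ.ord.ToType)
    (hX : ∀ i, X i ∈ F) :
    ∃ Y : Set ((Order.succ κ).ord.ToType), #↥Y = κ ∧
      (⋂ i ∈ Y, X i) ∈ F ∧
      ∃ α, α ∉ Y ∧ ∀ s : Set κ.ord.ToType, s.Finite → s ⊆ Z α →
        ∃ i ∈ Y, s ⊆ Z i :=
  pPoint_generalized_galvin_general κ hreg h2 F π hpp X Z hX
end

section
/- Let F₁,…,Fₙ be P-point filters on κ with witnessing functions π₁,…,πₙ. Then for every X ∈ ∏*_{i=1}^{n} F_i there exist sets X_i ∈ F_i (1 ≤ i ≤ n) such that the box ∏*_{i=1}^{n} X_i := {⟨α₁,…,αₙ⟩ ∈ [κ]^{n*} : α_i ∈ X_i for all 1 ≤ i ≤ n} is contained in X. -/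
/-!
Induct on the number of coordinates. If `X ∈ ∏* F`, then for `F 0`-many `α` the section `X_α`
contains a box `∏* Y_α` by induction; the problem is to replace the boxes `Y_α`, which depend on
the first coordinate, by a single one. For the coordinate `j` this is a diagonalisation along the
chain `a 0 < π 1 (a 1)`, …, `a (j-1) < π j (a j)`: the last link is handled by the diagonal
intersection `Δ*_α Y_α`, and each earlier link `a (i-1) < π i (a i)` by replacing the family with
`β ↦ ⋂_{α < π i β} Y_α`, an intersection of fewer than `κ` members of `F j`.
-/

open Cardinal Set

/-- `[κ]^{n*}`: the set of tuples `⟨α₀,…,α_{n-1}⟩` such that `α_{i} < π_{i+1}(α_{i+1})`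
for all consecutive indices. -/
def starTuples {C : Type} [LT C] (n : ℕ) (π : Fin n → C → C) :
    Set (Fin n → C) :=
  {a | ∀ (i : ℕ) (h : i + 1 < n),
    a ⟨i, Nat.lt_of_succ_lt h⟩ < π ⟨i + 1, h⟩ (a ⟨i + 1, h⟩)}

/-- Membership in the filter `∏*_{i} F i`, defined by recursion on the number of
coordinates: `X ∈ ∏* F` iff `{a : X_a ∈ ∏*(tail of F)} ∈ F 0`, where
`X_a` is the section of `X` at first coordinate `a`. -/
def memStarProd {C : Type} : (n : ℕ) → (Fin (n + 1) → Filter C) →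
    Set (Fin (n + 1) → C) → Prop
  | 0, F, X => {a : C | (fun _ => a) ∈ X} ∈ F 0
  | n + 1, F, X =>
      {a : C | memStarProd n (fun i => F i.succ) {v | Fin.cons a v ∈ X}} ∈ F 0

namespace IsPPointFilter

variable {κ : Cardinal} {F : Filter κ.ord.ToType} {π : κ.ord.ToType → κ.ord.ToType}

theorem diagInter_mem (h : IsPPointFilter κ F π) {A : κ.ord.ToType → Set κ.ord.ToType}
    (hA : ∀ α, A α ∈ F) : {ν | ∀ α, α < π ν → ν ∈ A α} ∈ F :=
  h.2.2.2 A hA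

theorem iInter_Iio_mem (h : IsPPointFilter κ F π) (β : κ.ord.ToType)
    {A : κ.ord.ToType → Set κ.ord.ToType} (hA : ∀ α, A α ∈ F) :
    ⋂ α : Iio β, A α ∈ F :=
  h.2.1 _ _ (by simpa using mk_Iio_lt β) fun α => hA α

end IsPPointFilter

section StarTuples

variable {C : Type} [LT C]

theorem lt_of_mem_starTuples {m : ℕ} {π : Fin m → C → C} {a : Fin m → C}
    (ha : a ∈ starTuples m π) {i j : Fin m} (hij : (j : ℕ) = i + 1) : a i < π j (a j) := by
  obtain ⟨i, hi⟩ := i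
  obtain ⟨j, hj⟩ := j
  subst hij
  exact ha i hj

theorem tail_mem_starTuples {n : ℕ} {π : Fin (n + 2) → C → C} {a : Fin (n + 2) → C}
    (ha : a ∈ starTuples (n + 2) π) : Fin.tail a ∈ starTuples (n + 1) (fun i => π i.succ) :=
  fun i h => ha (i + 1) (by omega)

def ContainsStarBox {m : ℕ} (F : Fin m → Filter C) (π : Fin m → C → C)
    (X : Set (Fin m → C)) : Prop :=
  ∃ Xs : Fin m → Set C, (∀ i, Xs i ∈ F i) ∧ {a | a ∈ starTuples m π ∧ ∀ i, a i ∈ Xs i} ⊆ X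

theorem containsStarBox_of_memStarProd_zero {F : Fin 1 → Filter C} {π : Fin 1 → C → C}
    {X : Set (Fin 1 → C)} (hX : memStarProd 0 F X) : ContainsStarBox F π X := by
  refine ⟨fun _ => {α | (fun _ => α) ∈ X}, fun i => Subsingleton.elim 0 i ▸ hX, ?_⟩
  rintro a ⟨-, ha⟩
  have ha_const : (fun _ => a 0) = a := funext fun i => congrArg a (Subsingleton.elim 0 i)
  exact ha_const ▸ ha 0

end StarTuples

variable {κ : Cardinal}

theorem exists_box_forall_starTuples_mem {m : ℕ} {F : Fin m → Filter κ.ord.ToType}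
    {π : Fin m → κ.ord.ToType → κ.ord.ToType} {i j : Fin m} (hij : i < j)
    (hF : IsPPointFilter κ (F j) (π j)) (S : κ.ord.ToType → Set κ.ord.ToType)
    (hS : ∀ α, S α ∈ F j) :
    ∃ Z : Fin m → Set κ.ord.ToType, (∀ k, Z k ∈ F k) ∧
      ∀ a ∈ starTuples m π, (∀ k, a k ∈ Z k) → a j ∈ S (a i) := by
  obtain ⟨d, hd⟩ := Nat.exists_eq_add_of_lt hij
  clear hij
  induction d generalizing i S with
  | zero =>
    refine ⟨fun k => if k = j then {ν | ∀ α, α < π j ν → ν ∈ S α} else univ, fun k => ?_,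
      fun a ha haZ => ?_⟩
    · dsimp only
      split_ifs with hk
      · exact hk ▸ hF.diagInter_mem hS
      · exact Filter.univ_mem
    · have haj : a j ∈ {ν | ∀ α, α < π j ν → ν ∈ S α} := by simpa using haZ j
      exact haj (a i) (lt_of_mem_starTuples ha hd)
  | succ d ih =>
    let i' : Fin m := ⟨i + 1, by omega⟩
    obtain ⟨Z, hZ, hchain⟩ := ih (i := i') (fun β => ⋂ α : Iio (π i' β), S α)
      (fun β => hF.iInter_Iio_mem _ hS) (by simp only [i']; omega)
    exact ⟨Z, hZ, fun a ha haZ =>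
      mem_iInter.1 (hchain a ha haZ) ⟨a i, lt_of_mem_starTuples ha rfl⟩⟩

theorem containsStarBox_of_forall_mem_section {n : ℕ} {F : Fin (n + 2) → Filter κ.ord.ToType}
    {π : Fin (n + 2) → κ.ord.ToType → κ.ord.ToType}
    (hpp : ∀ i : Fin (n + 1), IsPPointFilter κ (F i.succ) (π i.succ))
    {X : Set (Fin (n + 2) → κ.ord.ToType)} {A : Set κ.ord.ToType} (hA : A ∈ F 0)
    (hsec : ∀ α ∈ A,
      ContainsStarBox (fun i => F i.succ) (fun i => π i.succ) {v | Fin.cons α v ∈ X}) :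
    ContainsStarBox F π X := by
  have hsec' : ∀ α, ∃ Ys : Fin (n + 1) → Set κ.ord.ToType, (∀ i, Ys i ∈ F i.succ) ∧
      (α ∈ A → {v | v ∈ starTuples (n + 1) (fun i => π i.succ) ∧ ∀ i, v i ∈ Ys i} ⊆
        {v | Fin.cons α v ∈ X}) := by
    intro α
    by_cases hα : α ∈ A
    · obtain ⟨Ys, hYs, hbox⟩ := hsec α hα
      exact ⟨Ys, hYs, fun _ => hbox⟩
    · exact ⟨fun _ => univ, fun _ => Filter.univ_mem, (absurd · hα)⟩
  choose Ys hYs hbox using hsec'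
  choose Z hZ hchain using fun i : Fin (n + 1) =>
    exists_box_forall_starTuples_mem (Fin.succ_pos i) (hpp i) (fun α => Ys α i) (hYs · i)
  refine ⟨fun k => (if k = 0 then A else univ) ∩ ⋂ i, Z i k,
    fun k => Filter.inter_mem ?_ (Filter.iInter_mem.2 fun i => hZ i k), ?_⟩
  · split_ifs with hk
    · exact hk ▸ hA
    · exact Filter.univ_mem
  · rintro a ⟨ha, haXs⟩
    have ha0 : a 0 ∈ A := by simpa using (haXs 0).1
    rw [← Fin.cons_self_tail a]
    exact hbox (a 0) ha0
      ⟨tail_mem_starTuples ha, fun i => hchain i a ha fun k => mem_iInter.1 (haXs k).2 i⟩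

theorem starProd_contains_box_general
    (κ : Cardinal)
    (n : ℕ) (F : Fin (n + 1) → Filter κ.ord.ToType)
    (π : Fin (n + 1) → κ.ord.ToType → κ.ord.ToType)
    (hpp : ∀ i, IsPPointFilter κ (F i) (π i))
    (X : Set (Fin (n + 1) → κ.ord.ToType))
    (hX : memStarProd n F X) :
    ∃ Xs : Fin (n + 1) → Set κ.ord.ToType,
      (∀ i, Xs i ∈ F i) ∧
      {a | a ∈ starTuples (n + 1) π ∧ ∀ i, a i ∈ Xs i} ⊆ X := by
  induction n with
  | zero => exact containsStarBox_of_memStarProd_zero hX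
  | succ n ih =>
    exact containsStarBox_of_forall_mem_section (fun i => hpp i.succ) hX
      fun α hα => ih (fun i => F i.succ) (fun i => π i.succ) (fun i => hpp i.succ) _ hα

/-- Every member `X` of the filter `∏*_{i} F i` on `[κ]^{(n+1)*}` contains a "box":
there are `Xs i ∈ F i` such that every `*`-increasing tuple `a ∈ [κ]^{(n+1)*}` with
`a i ∈ Xs i` for all `i` belongs to `X`. -/
theorem starProd_contains_box
    (κ : Cardinal) (hreg : κ.IsRegular) (hκ : ℵ₀ < κ)
    (n : ℕ) (F : Fin (n + 1) → Filter κ.ord.ToType)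
    (π : Fin (n + 1) → κ.ord.ToType → κ.ord.ToType)
    (hpp : ∀ i, IsPPointFilter κ (F i) (π i))
    (X : Set (Fin (n + 1) → κ.ord.ToType))
    (hXsub : X ⊆ starTuples (n + 1) π)
    (hX : memStarProd n F X) :
    ∃ Xs : Fin (n + 1) → Set κ.ord.ToType,
      (∀ i, Xs i ∈ F i) ∧
      {a | a ∈ starTuples (n + 1) π ∧ ∀ i, a i ∈ Xs i} ⊆ X :=
  starProd_contains_box_general κ n F π hpp X hX
end

section
/- Let T be a measure-fat tree on cardinals θ₁ ≤ θ₂ ≤ … ≤ θₙ with ultrafilter assignment t ↦ W_t, and let f : mb(T) → B be a function into an arbitrary set B. Then there exist a measure-one-splitting subtree T' ⊆ T and a set of coordinates I ⊆ {1,…,n} such that for all maximal branches t, t' ∈ mb(T'): t↾I = t'↾I if and only if f(t) = f(t'). -/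
open Cardinal Set

/-- A measure-fat tree on `θ 0 ≤ θ 1 ≤ … ≤ θ (n-1)`: a prefix-closed set of finite
sequences of ordinals (the `i`-th entry below `θ i`) of length at most `n`, containing the
empty sequence, together with an assignment of a normal ultrafilter on `θ k` to every node
of length `k < n` such that the set of successors of that node is measure one. -/
structure MeasureFatTree (n : ℕ) (θ : Fin n → Cardinal) where
  tree : Set (List Ordinal)
  ultra : List Ordinal → Ultrafilter Ordinal
  nil_mem : ([] : List Ordinal) ∈ tree
  prefix_closed : ∀ s t : List Ordinal, t ∈ tree → s <+: t → s ∈ tree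
  length_le : ∀ t ∈ tree, t.length ≤ n
  bounded : ∀ t ∈ tree, ∀ i : Fin n, ∀ h : (i : ℕ) < t.length,
    t.get ⟨(i : ℕ), h⟩ < (θ i).ord
  normal : ∀ t ∈ tree, ∀ h : t.length < n,
    IsNormalUltrafilterOn (θ ⟨t.length, h⟩) (ultra t)
  succ_mem : ∀ t ∈ tree, t.length < n → {a : Ordinal | t ++ [a] ∈ tree} ∈ ultra t

/-- The maximal branches of a measure-fat tree: its nodes of length `n`. -/
def MeasureFatTree.mb {n : ℕ} {θ : Fin n → Cardinal} (T : MeasureFatTree n θ) :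
    Set (List Ordinal) :=
  {t | t ∈ T.tree ∧ t.length = n}

/-- `S` is a measure-one-splitting subtree of `T`: a subset of `T` which is itself a
measure-fat tree with the inherited ultrafilter assignment. -/
def MeasureFatTree.IsMOSubtree {n : ℕ} {θ : Fin n → Cardinal}
    (T : MeasureFatTree n θ) (S : Set (List Ordinal)) : Prop :=
  S ⊆ T.tree ∧ ([] : List Ordinal) ∈ S ∧
  (∀ s t : List Ordinal, t ∈ S → s <+: t → s ∈ S) ∧
  (∀ t ∈ S, t.length < n → {a : Ordinal | t ++ [a] ∈ S} ∈ T.ultra t)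

/-! Induction on the height. Above a node `t` of height `n - 1`, the function
`a ↦ f (t ++ [a])` is either constant on a measure-one set, or, by pressing down, for almost
every `a` its value is not attained at any sequence with entries below `a`; after shrinking the
tree this alternative is the same for all such nodes. In the first case the last coordinate is
unimportant, and the induction hypothesis is applied to the almost-everywhere value. In the
second case it is important: branches with different last entries get different values, and
for a common last entry `a` the value is determined by a canonical witness below `a`, which by
pressing down depends almost everywhere only on the node; the induction hypothesis is applied
to that dependence. -/

open Filter

universe u

namespace IsNormalUltrafilterOn

variable {θ : Cardinal} {U : Ultrafilter Ordinal}

theorem eventually_lt (hU : IsNormalUltrafilterOn θ U) {x : Ordinal} (hx : x < θ.ord) :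
    ∀ᶠ a in (U : Filter Ordinal), x < a := by
  filter_upwards [hU.2.2.1 x hx (fun ξ => {ξ}ᶜ) fun ξ _ => hU.2.1 ξ, hU.2.1 x]
    with a hbelow hne
  simp only [mem_iInter, mem_Iio, mem_compl_iff, mem_singleton_iff] at hbelow hne
  exact lt_of_le_of_ne (not_lt.1 fun h => hbelow a h rfl) (Ne.symm hne)

theorem exists_eventually_eq_of_eventually_lt (hU : IsNormalUltrafilterOn θ U)
    {g : Ordinal → Ordinal} (hg : ∀ᶠ a in (U : Filter Ordinal), g a < a) :
    ∃ c, ∀ᶠ a in (U : Filter Ordinal), g a = c := by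
  by_contra! h
  obtain ⟨b, ⟨-, hb⟩, hgb⟩ :=
    (Eventually.and (hU.2.2.2 (fun c => {a | g a ≠ c}) fun c _ => h c) hg).exists
  exact hb _ hgb rfl

theorem exists_eventually_eq_of_forall_mem_lt (hU : IsNormalUltrafilterOn θ U) {k : ℕ}
    {g : Ordinal → List Ordinal}
    (hg : ∀ᶠ a in (U : Filter Ordinal), (g a).length = k ∧ ∀ x ∈ g a, x < a) :
    ∃ L, ∀ᶠ a in (U : Filter Ordinal), g a = L := by
  have hcoord (i : Fin k) : ∃ c, ∀ᶠ a in (U : Filter Ordinal), (g a).getD i 0 = c :=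
    hU.exists_eventually_eq_of_eventually_lt <| hg.mono fun a hga => by
      rw [List.getD_eq_getElem _ _ (hga.1 ▸ i.isLt)]
      exact hga.2 _ (List.getElem_mem _)
  choose c hc using hcoord
  refine ⟨List.ofFn c, ?_⟩
  filter_upwards [hg, eventually_all.2 hc] with a hga hca
  refine List.ext_getElem (by simp [hga.1]) fun i h _ => ?_
  rw [List.getElem_ofFn, ← List.getD_eq_getElem _ 0 h]
  exact hca ⟨i, hga.1 ▸ h⟩

theorem eventually_forall_ne_of_not_exists_eventually_eq (hU : IsNormalUltrafilterOn θ U)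
    {β : Type*} {g : Ordinal → β} (H : List Ordinal → β) (k : ℕ)
    (hg : ¬∃ c, ∀ᶠ a in (U : Filter Ordinal), g a = c) :
    ∀ᶠ a in (U : Filter Ordinal),
      ∀ s : List Ordinal, s.length = k → (∀ x ∈ s, x < a) → H s ≠ g a := by
  by_contra! hold
  let P a s := (s.length = k ∧ ∀ x ∈ s, x < a) ∧ H s = g a
  replace hold : ∀ᶠ a in (U : Filter Ordinal), P a (Classical.epsilon (P a)) :=
    hold.mono fun a ⟨s, hs, hx, hs'⟩ => Classical.epsilon_spec ⟨s, ⟨hs, hx⟩, hs'⟩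
  obtain ⟨L, hL⟩ := hU.exists_eventually_eq_of_forall_mem_lt (hold.mono fun a h => h.1)
  refine hg ⟨H L, ?_⟩
  filter_upwards [hold, hL] with a ha haL
  rw [← haL, ha.2]

end IsNormalUltrafilterOn

theorem Ultrafilter.eventually_map_eq_pure {α β : Type*} {U : Ultrafilter α} {g : α → β}
    (h : ∃ c, ∀ᶠ a in (U : Filter α), g a = c) :
    ∀ᶠ a in (U : Filter α), U.map g = pure (g a) := by
  obtain ⟨c, hc⟩ := h
  obtain ⟨x, hx, hmap⟩ := (U.map g).eq_pure_of_finite_mem (finite_singleton c) hc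
  filter_upwards [hc] with a ha
  rw [hmap, ha, mem_singleton_iff.1 hx]

namespace List

variable {α : Type*} {l l' : List α} {n : ℕ}

theorem getD_append_singleton_of_length (hl : l.length = n) (a d : α) :
    (l ++ [a]).getD n d = a := by
  rw [getD_append_right _ _ _ _ hl.le, hl, Nat.sub_self]
  rfl

theorem getD_castSucc_append (hl : l.length = n) (l' : List α) (d : α) (i : Fin n) :
    (l ++ l').getD (i.castSucc : ℕ) d = l.getD i d :=
  getD_append _ _ _ _ (hl ▸ i.isLt)

theorem forall_mem_image_castSucc_getD_append_iff (hl : l.length = n) (hl' : l'.length = n)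
    (I : Set (Fin n)) (a a' d : α) :
    (∀ i ∈ Fin.castSucc '' I, (l ++ [a]).getD (i : ℕ) d = (l' ++ [a']).getD (i : ℕ) d) ↔
      ∀ i ∈ I, l.getD (i : ℕ) d = l'.getD (i : ℕ) d := by
  simp only [forall_mem_image, getD_castSucc_append hl, getD_castSucc_append hl']

theorem forall_mem_append_singleton_lt [Preorder α] {a b : α} (hl : ∀ x ∈ l, x < a)
    (hab : a < b) : ∀ x ∈ l ++ [a], x < b := by
  intro x hx
  rcases mem_append.1 hx with hx | hx
  exacts [(hl x hx).trans hab, mem_singleton.1 hx ▸ hab]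

end List

noncomputable def witnessBelow {β : Type*} (F : List Ordinal → β) (t : List Ordinal)
    (a : Ordinal) : List Ordinal :=
  Classical.epsilon fun s =>
    s.length = t.length ∧ (∀ x ∈ s, x < a) ∧ F (s ++ [a]) = F (t ++ [a])

section witnessBelow

variable {β : Type*} {F : List Ordinal → β} {t t' : List Ordinal} {a : Ordinal}

theorem witnessBelow_spec (ht : ∀ x ∈ t, x < a) :
    (witnessBelow F t a).length = t.length ∧ (∀ x ∈ witnessBelow F t a, x < a) ∧
      F (witnessBelow F t a ++ [a]) = F (t ++ [a]) :=
  Classical.epsilon_spec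
    (p := fun s => s.length = t.length ∧ (∀ x ∈ s, x < a) ∧ F (s ++ [a]) = F (t ++ [a]))
    ⟨t, rfl, ht, rfl⟩

theorem witnessBelow_congr (hl : t.length = t'.length) (hF : F (t ++ [a]) = F (t' ++ [a])) :
    witnessBelow F t a = witnessBelow F t' a := by
  rw [witnessBelow, witnessBelow, hl, hF]

end witnessBelow

def IsImportantCoords {n : ℕ} {β : Type*} (S : Set (List Ordinal)) (I : Set (Fin n))
    (F : List Ordinal → β) : Prop :=
  ∀ t ∈ S, t.length = n → ∀ t' ∈ S, t'.length = n →
    ((∀ i ∈ I, t.getD (i : ℕ) 0 = t'.getD (i : ℕ) 0) ↔ F t = F t')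

namespace MeasureFatTree

variable {n m : ℕ}

theorem eventually_forall_mem_lt {θ : Fin n → Cardinal} (hmono : Monotone θ)
    (T : MeasureFatTree n θ) {t : List Ordinal} (ht : t ∈ T.tree) (hlt : t.length < n) :
    ∀ᶠ a in (T.ultra t : Filter Ordinal), ∀ x ∈ t, x < a := by
  refine (eventually_all_finite t.finite_toSet).2 fun x hx => ?_
  obtain ⟨i, hi, rfl⟩ := List.getElem_of_mem hx
  refine (T.normal t ht hlt).eventually_lt ((T.bounded t ht ⟨i, hi.trans hlt⟩ hi).trans_le ?_)
  exact Cardinal.ord_le_ord.2 (hmono (Fin.mk_le_mk.2 hi.le))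

def restrict {θ : Fin n → Cardinal} (T : MeasureFatTree n θ) (S : Set (List Ordinal))
    (h : T.IsMOSubtree S) : MeasureFatTree n θ where
  tree := S
  ultra := T.ultra
  nil_mem := h.2.1
  prefix_closed := h.2.2.1
  length_le t ht := T.length_le t (h.1 ht)
  bounded t ht := T.bounded t (h.1 ht)
  normal t ht := T.normal t (h.1 ht)
  succ_mem := h.2.2.2

theorem IsMOSubtree.trans {θ : Fin n → Cardinal} {T : MeasureFatTree n θ}
    {S S' : Set (List Ordinal)} (h : T.IsMOSubtree S) (h' : (T.restrict S h).IsMOSubtree S') :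
    T.IsMOSubtree S' :=
  ⟨h'.1.trans h.1, h'.2⟩

theorem isMOSubtree_singleton_nil {θ : Fin 0 → Cardinal} (T : MeasureFatTree 0 θ) :
    T.IsMOSubtree {[]} := by
  refine ⟨singleton_subset_iff.2 T.nil_mem, rfl, fun s t ht hs => ?_, fun t _ h => ?_⟩
  · rw [mem_singleton_iff.1 ht] at hs
    exact List.prefix_nil.1 hs
  · exact absurd h (Nat.not_lt_zero _)

def truncate {θ : Fin (m + 1) → Cardinal} (T : MeasureFatTree (m + 1) θ) :
    MeasureFatTree m fun i => θ i.castSucc where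
  tree := {t | t ∈ T.tree ∧ t.length ≤ m}
  ultra := T.ultra
  nil_mem := ⟨T.nil_mem, Nat.zero_le m⟩
  prefix_closed s t ht hs := ⟨T.prefix_closed s t ht.1 hs, hs.length_le.trans ht.2⟩
  length_le _ ht := ht.2
  bounded t ht i := T.bounded t ht.1 i.castSucc
  normal t ht h := T.normal t ht.1 (Nat.lt_succ_of_lt h)
  succ_mem t ht h := by
    filter_upwards [T.succ_mem t ht.1 (Nat.lt_succ_of_lt h)] with a ha
    exact ⟨ha, by simpa using h⟩

section extendTop

variable {β : Type*} {θ : Fin (m + 1) → Cardinal} (T : MeasureFatTree (m + 1) θ)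
  (F : List Ordinal → β) {S : Set (List Ordinal)} {Z : List Ordinal → Set Ordinal}

def extendTop (S : Set (List Ordinal)) (Z : List Ordinal → Set Ordinal) : Set (List Ordinal) :=
  S ∪ {u | ∃ t ∈ S, t.length = m ∧ ∃ a ∈ Z t, t ++ [a] ∈ T.tree ∧ u = t ++ [a]}

variable {T F}

theorem isMOSubtree_extendTop (hS : T.truncate.IsMOSubtree S)
    (hZ : ∀ t ∈ S, t.length = m → Z t ∈ T.ultra t) : T.IsMOSubtree (T.extendTop S Z) := by
  refine ⟨?_, Or.inl hS.2.1, ?_, ?_⟩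
  · rintro u (hu | ⟨t, -, -, a, -, hta, rfl⟩)
    exacts [(hS.1 hu).1, hta]
  · rintro s u (hu | ⟨t, ht, hl, a, ha, hta, rfl⟩) hs
    · exact Or.inl (hS.2.2.1 s u hu hs)
    · rcases List.prefix_concat_iff.1 hs with rfl | hs
      · exact Or.inr ⟨t, ht, hl, a, ha, hta, rfl⟩
      · exact Or.inl (hS.2.2.1 s t ht hs)
  · rintro t (ht | ⟨t, -, hl, a, -, -, rfl⟩) hlt
    · rcases (hS.1 ht).2.lt_or_eq with hl | hl
      · filter_upwards [hS.2.2.2 t ht hl] with a ha using Or.inl ha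
      · filter_upwards [hZ t ht hl, T.succ_mem t (hS.1 ht).1 hlt] with a ha hta
        exact Or.inr ⟨t, ht, hl, a, ha, hta, rfl⟩
    · simp [hl] at hlt

theorem exists_of_mem_extendTop (hS : T.truncate.IsMOSubtree S) {u : List Ordinal}
    (hu : u ∈ T.extendTop S Z) (hl : u.length = m + 1) :
    ∃ t ∈ S, t.length = m ∧ ∃ a ∈ Z t, u = t ++ [a] := by
  rcases hu with hu | ⟨t, ht, htl, a, ha, -, rfl⟩
  · have := (hS.1 hu).2
    omega
  · exact ⟨t, ht, htl, a, ha, rfl⟩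

theorem isImportantCoords_extendTop (hS : T.truncate.IsMOSubtree S) {I : Set (Fin (m + 1))}
    (h : ∀ t ∈ S, t.length = m → ∀ a ∈ Z t,
      ∀ t' ∈ S, t'.length = m → ∀ a' ∈ Z t',
      ((∀ i ∈ I, (t ++ [a]).getD (i : ℕ) 0 = (t' ++ [a']).getD (i : ℕ) 0) ↔
        F (t ++ [a]) = F (t' ++ [a']))) :
    IsImportantCoords (T.extendTop S Z) I F := by
  intro u hu hl u' hu' hl'
  obtain ⟨t, ht, htl, a, ha, rfl⟩ := exists_of_mem_extendTop hS hu hl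
  obtain ⟨t', ht', htl', a', ha', rfl⟩ := exists_of_mem_extendTop hS hu' hl'
  exact h t ht htl a ha t' ht' htl' a' ha'

variable (T F)

def stableSucc (t : List Ordinal) : Set Ordinal :=
  {a | (T.ultra t).map (fun b => F (t ++ [b])) = pure (F (t ++ [a]))}

def freshSucc (t : List Ordinal) : Set Ordinal :=
  {a | (∀ x ∈ t, x < a) ∧
    (∀ s : List Ordinal, s.length = m + 1 → (∀ x ∈ s, x < a) → F s ≠ F (t ++ [a])) ∧
    (T.ultra t).map (witnessBelow F t) = pure (witnessBelow F t a)}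

variable {T F}

theorem freshSucc_mem (hmono : Monotone θ) {t : List Ordinal} (ht : t ∈ T.tree)
    (hl : t.length = m) (hF : ¬∃ c, ∀ᶠ a in (T.ultra t : Filter Ordinal), F (t ++ [a]) = c) :
    T.freshSucc F t ∈ T.ultra t := by
  have hlt : t.length < m + 1 := hl ▸ m.lt_succ_self
  have hU := T.normal t ht hlt
  have hbelow := T.eventually_forall_mem_lt hmono ht hlt
  obtain ⟨L, hL⟩ := hU.exists_eventually_eq_of_forall_mem_lt <| hbelow.mono fun a h =>
    ⟨(witnessBelow_spec (F := F) h).1.trans hl, (witnessBelow_spec h).2.1⟩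
  filter_upwards [hbelow, hU.eventually_forall_ne_of_not_exists_eventually_eq F (m + 1) hF,
    Ultrafilter.eventually_map_eq_pure ⟨L, hL⟩]
    with a h₁ h₂ h₃ using ⟨h₁, h₂, h₃⟩

theorem isImportantCoords_extendTop_stableSucc (hS : T.truncate.IsMOSubtree S)
    {I : Set (Fin m)} (hI : IsImportantCoords S I fun t => (T.ultra t).map fun b => F (t ++ [b])) :
    IsImportantCoords (T.extendTop S (T.stableSucc F)) (Fin.castSucc '' I) F :=
  isImportantCoords_extendTop hS fun t ht hl a ha t' ht' hl' a' ha' => by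
    rw [List.forall_mem_image_castSucc_getD_append_iff hl hl', hI t ht hl t' ht' hl']
    beta_reduce
    rw [ha, ha', Ultrafilter.pure_injective.eq_iff]

theorem isImportantCoords_extendTop_freshSucc (hS : T.truncate.IsMOSubtree S)
    {I : Set (Fin m)} (hI : IsImportantCoords S I fun t => (T.ultra t).map (witnessBelow F t)) :
    IsImportantCoords (T.extendTop S (T.freshSucc F)) (insert (Fin.last m) (Fin.castSucc '' I))
      F :=
  isImportantCoords_extendTop hS fun t ht hl a ha t' ht' hl' a' ha' => by
    obtain ⟨hta, hnew, hmap⟩ := ha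
    obtain ⟨hta', hnew', hmap'⟩ := ha'
    rw [forall_mem_insert, Fin.val_last, List.getD_append_singleton_of_length hl,
      List.getD_append_singleton_of_length hl',
      List.forall_mem_image_castSucc_getD_append_iff hl hl', hI t ht hl t' ht' hl']
    beta_reduce
    rw [hmap, hmap', Ultrafilter.pure_injective.eq_iff]
    constructor
    · rintro ⟨rfl, hw⟩
      rw [← (witnessBelow_spec (F := F) hta).2.2, hw, (witnessBelow_spec (F := F) hta').2.2]
    · intro hF
      obtain rfl : a = a' := le_antisymm
        (not_lt.1 fun h => hnew _ (by simp [hl'])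
          (List.forall_mem_append_singleton_lt hta' h) hF.symm)
        (not_lt.1 fun h => hnew' _ (by simp [hl]) (List.forall_mem_append_singleton_lt hta h) hF)
      exact ⟨rfl, witnessBelow_congr (hl.trans hl'.symm) hF⟩

end extendTop

theorem exists_isMOSubtree_forall_iff {θ : Fin n → Cardinal} (T : MeasureFatTree n θ)
    (P : List Ordinal → Prop) :
    ∃ S, T.IsMOSubtree S ∧ ∃ b : Prop, ∀ t ∈ S, t.length = n → (P t ↔ b) := by
  induction n generalizing P with
  | zero => exact ⟨{[]}, T.isMOSubtree_singleton_nil, P [], fun t ht _ => by rw [ht]⟩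
  | succ m ih =>
    let Q t := ∀ᶠ a in (T.ultra t : Filter Ordinal), P (t ++ [a])
    obtain ⟨S, hS, b, hb⟩ := ih T.truncate Q
    refine ⟨T.extendTop S fun t => {a | P (t ++ [a]) ↔ Q t},
      isMOSubtree_extendTop hS fun t _ _ => ?_, b, fun u hu hl => ?_⟩
    · by_cases h : Q t
      · filter_upwards [h] with a ha using iff_of_true ha h
      · filter_upwards [Ultrafilter.eventually_not.2 h] with a ha using iff_of_false ha h
    · obtain ⟨t, ht, htl, a, ha, rfl⟩ := exists_of_mem_extendTop hS hu hl
      exact ha.trans (hb t ht htl)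

/-- The codomain lives in the universe of `List Ordinal.{u}` because the induction step applies
the hypothesis to functions into `Ultrafilter (List Ordinal)`. -/
theorem exists_isMOSubtree_isImportantCoords {θ : Fin n → Cardinal.{u}} {β : Type (u + 1)}
    (hmono : Monotone θ) (T : MeasureFatTree n θ) (F : List Ordinal.{u} → β) :
    ∃ S, T.IsMOSubtree S ∧ ∃ I : Set (Fin n), IsImportantCoords S I F := by
  induction n generalizing β with
  | zero =>
    refine ⟨{[]}, T.isMOSubtree_singleton_nil, ∅, fun t ht _ t' ht' _ => ?_⟩
    rw [mem_singleton_iff.1 ht, mem_singleton_iff.1 ht']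
    simp
  | succ m ih =>
    have hmono' : Monotone fun i : Fin m => θ i.castSucc :=
      hmono.comp fun _ _ h => Fin.castSucc_le_castSucc_iff.2 h
    obtain ⟨S₁, hS₁, b, hb⟩ := T.truncate.exists_isMOSubtree_forall_iff
      fun t => ∃ c, ∀ᶠ a in (T.ultra t : Filter Ordinal), F (t ++ [a]) = c
    by_cases hconst : b
    · obtain ⟨S, hS, I, hI⟩ := ih hmono' (T.truncate.restrict S₁ hS₁)
        fun t => (T.ultra t).map fun a => F (t ++ [a])
      exact ⟨_, isMOSubtree_extendTop (hS₁.trans hS) fun t ht hl =>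
          Ultrafilter.eventually_map_eq_pure ((hb t (hS.1 ht) hl).2 hconst),
        _, isImportantCoords_extendTop_stableSucc (hS₁.trans hS) hI⟩
    · obtain ⟨S, hS, I, hI⟩ := ih hmono' (T.truncate.restrict S₁ hS₁)
        fun t => (T.ultra t).map (witnessBelow F t)
      exact ⟨_, isMOSubtree_extendTop (hS₁.trans hS) fun t ht hl =>
          freshSucc_mem hmono ((hS₁.trans hS).1 ht).1 hl ((hb t (hS.1 ht) hl).not.2 hconst),
        _, isImportantCoords_extendTop_freshSucc (hS₁.trans hS) hI⟩

end MeasureFatTree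

theorem important_coordinates_general
    {B : Type*} (n : ℕ) (θ : Fin n → Cardinal)
    (hmono : Monotone θ)
    (T : MeasureFatTree n θ) (f : List Ordinal → B) :
    ∃ S : Set (List Ordinal), T.IsMOSubtree S ∧
      ∃ I : Set (Fin n),
        ∀ t ∈ S, t.length = n → ∀ t' ∈ S, t'.length = n →
          ((∀ i ∈ I, t.getD (i : ℕ) 0 = t'.getD (i : ℕ) 0) ↔ f t = f t') := by
  obtain ⟨S, hS, I, hI⟩ :=
    T.exists_isMOSubtree_isImportantCoords hmono (Quotient.mk (Setoid.ker f))
  exact ⟨S, hS, I, fun t ht hl t' ht' hl' => (hI t ht hl t' ht' hl').trans Quotient.eq⟩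

/-- **Important coordinates.** For every measure-fat tree `T` on uncountable cardinals
`θ 0 ≤ … ≤ θ (n-1)` and every function `f` on the maximal branches of `T` into an
arbitrary set `B`, there are a measure-one-splitting subtree `S ⊆ T` and a set of
coordinates `I ⊆ {0,…,n-1}` such that for all maximal branches `t, t'` of `S`:
`t ↾ I = t' ↾ I` if and only if `f t = f t'`. -/
theorem important_coordinates
    {B : Type*} (n : ℕ) (hn : 1 ≤ n) (θ : Fin n → Cardinal)
    (hθ : ∀ i, ℵ₀ < θ i) (hmono : Monotone θ)
    (T : MeasureFatTree n θ) (f : List Ordinal → B) :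
    ∃ S : Set (List Ordinal), T.IsMOSubtree S ∧
      ∃ I : Set (Fin n),
        ∀ t ∈ S, t.length = n → ∀ t' ∈ S, t'.length = n →
          ((∀ i ∈ I, t.getD (i : ℕ) 0 = t'.getD (i : ℕ) 0) ↔ f t = f t') :=
  important_coordinates_general n θ hmono T f
end

section
/- Let κ be an infinite cardinal with 2^{<κ} = κ. Let ⟨X_i : i < κ⁺⟩ and ⟨Z_i : i < κ⁺⟩ be sequences of subsets of κ. For α < κ⁺, ξ < κ and a finite set ν⃗ of ordinals below κ, put H_{α,ξ,ν⃗} = {i < κ⁺ : X_i ∩ ξ = X_α ∩ ξ and ν⃗ ⊆ Z_i}. Then there exists α* < κ⁺ such that for every ξ < κ and every finite ν⃗ ⊆ Z_{α*}, the set H_{α*,ξ,ν⃗} has cardinality κ⁺. -/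
/-!
Suppose no index works, and choose for each `α` a witness `(ξ α, ν α)` whose agreement set has
size at most `κ`. Attach to `α` its pattern `(ξ α, X α ∩ ξ α, ν α)`. Every index sharing the
pattern of `α` lies in the agreement set of `α`, so each pattern class has size at most `κ`;
since `2^{<κ} = κ` there are only `κ` patterns, hence `κ⁺ ≤ κ · κ = κ`, a contradiction.
-/

open Cardinal Set

namespace Cardinal

universe u

variable {α β : Type u} {κ : Cardinal.{u}}

theorem mk_le_of_mk_preimage_singleton_apply_le (hκ : ℵ₀ ≤ κ) (f : α → β) (hβ : #β ≤ κ)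
    (hf : ∀ a, #(f ⁻¹' {f a}) ≤ κ) : #α ≤ κ := by
  have hfibers : ∀ b, #(f ⁻¹' {b}) ≤ κ := by
    intro b
    rcases (f ⁻¹' {b}).eq_empty_or_nonempty with h | ⟨a, rfl⟩
    · simp [h]
    · exact hf a
  calc #α ≤ #β * κ := mk_le_mk_mul_of_mk_preimage_le f hfibers
    _ ≤ κ * κ := by gcongr
    _ = κ := mul_eq_self hκ

theorem mk_subset_Iio_le [Preorder α] (hκ : ℵ₀ ≤ κ) (hα : #α ≤ κ)
    (h : ∀ ξ : α, 2 ^ #(Iio ξ) ≤ κ) : #{p : α × Set α // p.2 ⊆ Iio p.1} ≤ κ := by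
  refine mk_le_of_mk_preimage_singleton_apply_le hκ (fun p => p.1.1) hα fun p => ?_
  calc #((fun q : {p : α × Set α // p.2 ⊆ Iio p.1} => q.1.1) ⁻¹' {p.1.1})
      ≤ #(𝒫 Iio p.1.1) := by
        refine mk_le_of_injective (f := fun q => ⟨q.1.1.2, by
          simpa only [mem_powerset_iff, ← mem_singleton_iff.mp q.2] using q.1.2⟩) ?_
        rintro ⟨⟨⟨ξ, A⟩, hA⟩, hξ⟩ ⟨⟨⟨η, B⟩, hB⟩, hη⟩ hAB
        simp only [mem_preimage, mem_singleton_iff] at hξ hη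
        simp_all
    _ = 2 ^ #(Iio p.1.1) := mk_powerset _
    _ ≤ κ := h _

theorem mk_subset_Iio_prod_finset_le (hκ : ℵ₀ ≤ κ) (h2 : ∀ ν < κ, 2 ^ ν ≤ κ) :
    #({p : κ.ord.ToType × Set κ.ord.ToType // p.2 ⊆ Iio p.1} × Finset κ.ord.ToType) ≤ κ := by
  have : Infinite κ.ord.ToType := infinite_iff.mpr (by rwa [mk_ord_toType])
  rw [mk_prod, lift_id, lift_id, mk_finset_of_infinite, mk_ord_toType]
  calc _ ≤ κ * κ := by
        gcongr
        exact mk_subset_Iio_le hκ (mk_ord_toType κ).le fun ξ => h2 _ (by simpa using mk_Iio_lt ξ)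
    _ = κ := mul_eq_self hκ

end Cardinal

/-- Let `κ` be an infinite cardinal with `2^{<κ} = κ`, and let `⟨X i : i < κ⁺⟩` and
`⟨Z i : i < κ⁺⟩` be sequences of subsets of `κ`. Then there is `α* < κ⁺` such that for
every `ξ < κ` and every finite `ν ⊆ Z α*`, the set
`H = {i < κ⁺ : X i ∩ ξ = X α* ∩ ξ and ν ⊆ Z i}` has cardinality `κ⁺`. -/
theorem exists_index_with_large_agreement_sets
    (κ : Cardinal) (hκ : ℵ₀ ≤ κ)
    (h2 : ∀ ν : Cardinal, ν < κ → (2 : Cardinal) ^ ν ≤ κ)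
    (X Z : (Order.succ κ).ord.ToType → Set κ.ord.ToType) :
    ∃ αs : (Order.succ κ).ord.ToType,
      ∀ ξ : κ.ord.ToType, ∀ ν : Finset κ.ord.ToType, ↑ν ⊆ Z αs →
        #↥{i : (Order.succ κ).ord.ToType |
            X i ∩ Set.Iio ξ = X αs ∩ Set.Iio ξ ∧ ↑ν ⊆ Z i} = Order.succ κ := by
  by_contra! hcon
  choose ξ ν hν hne using hcon
  have hsmall (α) : #{i | X i ∩ Iio (ξ α) = X α ∩ Iio (ξ α) ∧ ↑(ν α) ⊆ Z i} ≤ κ :=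
    Order.lt_succ_iff.mp (((mk_set_le _).trans_eq (mk_ord_toType _)).lt_of_ne (hne α))
  let pattern (i : (Order.succ κ).ord.ToType) :
      {p : κ.ord.ToType × Set κ.ord.ToType // p.2 ⊆ Iio p.1} × Finset κ.ord.ToType :=
    (⟨(ξ i, X i ∩ Iio (ξ i)), inter_subset_right⟩, ν i)
  have hfiber (α) : pattern ⁻¹' {pattern α} ⊆
      {i | X i ∩ Iio (ξ α) = X α ∩ Iio (ξ α) ∧ ↑(ν α) ⊆ Z i} := by
    intro i hi
    simp only [mem_preimage, mem_singleton_iff, pattern, Prod.mk.injEq, Subtype.mk.injEq] at hi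
    obtain ⟨⟨hξ, hX⟩, hν'⟩ := hi
    exact ⟨hξ ▸ hX, hν' ▸ hν i⟩
  have hle := mk_le_of_mk_preimage_singleton_apply_le hκ pattern
    (mk_subset_Iio_prod_finset_le hκ h2) fun α => (mk_le_mk_of_subset (hfiber α)).trans (hsmall α)
  rw [mk_ord_toType] at hle
  exact (Order.lt_succ κ).not_ge hle
end
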